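/- Let (M, c) be a gem with more than 4 vertices that has a 2-edge cut. Let c' be any colouring obtained from c by swapping the colours red and blue on a set of edges that is a union of connected components of the spanning subgraph formed by the red and blue edges (and leaving all other colours unchanged). Then (M, c') has a 2-edge cut both of whose edges are coloured yellow under c'. -/

import Mathlib

/-!
Properness forces the three edges at a vertex of a cubic graph to carry the three colours, so each
colour class is a perfect matching and the number of cut edges of each colour has the parity of
`|S|`. Hence both edges of a 2-edge cut have the same colour. If that colour is red (or blue), the
cut edges are opposite sides `uv` and `bd` of a red-blue square `u v d b` with `u, b ∈ S`, and
removing `u` and `b` from `S` leaves exactly the two yellow edges at `u` and `b` in the cut.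
Swapping red and blue never changes a yellow edge.
-/

/-- The three colours used in a gem. -/
inductive Colour : Type
  | red | yellow | blue
deriving DecidableEq

/-- A proper edge colouring of a graph: two distinct edges sharing an endpoint
receive different colours. -/
def ProperEdgeColouring {V : Type*} {α : Type*} (G : SimpleGraph V) (c : Sym2 V → α) : Prop :=
  ∀ e₁ ∈ G.edgeSet, ∀ e₂ ∈ G.edgeSet, e₁ ≠ e₂ → (∃ v, v ∈ e₁ ∧ v ∈ e₂) → c e₁ ≠ c e₂

/-- A cubic graph: every vertex has degree 3. -/
def IsCubic {V : Type*} (G : SimpleGraph V) : Prop :=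
  ∀ v : V, (G.neighborSet v).ncard = 3

/-- The edge cut determined by a vertex set `S`: the set of edges of `G`
with exactly one endpoint in `S`. -/
def edgeCut {V : Type*} (G : SimpleGraph V) (S : Set V) : Set (Sym2 V) :=
  {e | ∃ u v, e = s(u, v) ∧ G.Adj u v ∧ u ∈ S ∧ v ∉ S}

/-- The spanning subgraph of `G` formed by the edges coloured `x` or `y`. -/
def twoColourSubgraph {V : Type*} {α : Type*} (G : SimpleGraph V) (c : Sym2 V → α)
    (x y : α) : SimpleGraph V where
  Adj u v := G.Adj u v ∧ (c s(u, v) = x ∨ c s(u, v) = y)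
  symm := by
    constructor
    intro u v h
    refine ⟨h.1.symm, ?_⟩
    rw [Sym2.eq_swap]
    exact h.2
  loopless := ⟨fun v h => G.irrefl h.1⟩

/-- A gem: a connected cubic graph with a proper 3-edge-colouring (red, yellow,
blue) such that every connected component of the spanning subgraph formed by
the red and blue edges is a cycle of length 4 (equivalently, for a simple
graph: that subgraph is 2-regular and each of its connected components has
exactly 4 vertices). -/
structure IsGem {V : Type*} (M : SimpleGraph V) (c : Sym2 V → Colour) : Prop where
  connected : M.Connected
  cubic : IsCubic M
  proper : ProperEdgeColouring M c
  rb_two_regular : ∀ v : V,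
    ((twoColourSubgraph M c Colour.red Colour.blue).neighborSet v).ncard = 2
  rb_components_card4 : ∀ v : V,
    ((twoColourSubgraph M c Colour.red Colour.blue).connectedComponentMk v).supp.ncard = 4

/-- Exchange red and blue, leaving yellow fixed. -/
def swapColour : Colour → Colour
  | Colour.red => Colour.blue
  | Colour.blue => Colour.red
  | Colour.yellow => Colour.yellow

open Classical in
/-- The colouring obtained from `c` by swapping the colours red and blue on
every edge of `D` and leaving all other edges unchanged. -/
noncomputable def swapRB {V : Type*} (c : Sym2 V → Colour) (D : Set (Sym2 V)) :
    Sym2 V → Colour :=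
  fun e => if e ∈ D then swapColour (c e) else c e

/-- `D` is a union of connected components of the red-blue spanning subgraph:
every edge of `D` is a red-blue edge, and any two red-blue edges lying in the
same connected component of the red-blue subgraph are either both in `D` or
both outside `D`. -/
def UnionOfRBComponents {V : Type*} (M : SimpleGraph V) (c : Sym2 V → Colour)
    (D : Set (Sym2 V)) : Prop :=
  D ⊆ (twoColourSubgraph M c Colour.red Colour.blue).edgeSet ∧
  ∀ e₁ ∈ (twoColourSubgraph M c Colour.red Colour.blue).edgeSet,
    ∀ e₂ ∈ (twoColourSubgraph M c Colour.red Colour.blue).edgeSet,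
      (∃ u v, u ∈ e₁ ∧ v ∈ e₂ ∧
        (twoColourSubgraph M c Colour.red Colour.blue).Reachable u v) →
      (e₁ ∈ D ↔ e₂ ∈ D)

namespace Function.Involutive

variable {α : Type*} {f : α → α}

theorem even_ncard_of_mapsTo (hf : Involutive f) (hfix : ∀ a, f a ≠ a) {T : Set α}
    (hT : T.Finite) (hmaps : Set.MapsTo f T T) : Even T.ncard := by
  classical
  have hsum : ∑ _a ∈ hT.toFinset, (1 : ZMod 2) = 0 :=
    Finset.sum_involution (fun a _ => f a) (fun _ _ => by decide) (fun a _ _ => hfix a)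
      (fun a ha => by simpa using hmaps (by simpa using ha)) (fun a _ => hf a)
  rw [Finset.sum_const, nsmul_one, ZMod.natCast_eq_zero_iff_even,
    ← Set.ncard_eq_toFinset_card T hT] at hsum
  exact hsum

theorem ncard_sdiff_preimage_modEq (hf : Involutive f) (hfix : ∀ a, f a ≠ a) {S : Set α}
    (hS : S.Finite) : (S \ f ⁻¹' S).ncard ≡ S.ncard [MOD 2] := by
  have hinter : Even (S ∩ f ⁻¹' S).ncard :=
    hf.even_ncard_of_mapsTo hfix (hS.inter_of_left _)
      fun a ha => ⟨ha.2, by simpa only [Set.mem_preimage, hf a] using ha.1⟩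
  rw [← Set.ncard_inter_add_ncard_sdiff_eq_ncard S (f ⁻¹' S) hS]
  obtain ⟨k, hk⟩ := hinter
  rw [hk]
  exact (Nat.modEq_iff_dvd' (by omega)).mpr (by simp [← two_mul])

end Function.Involutive

instance : Fintype Colour :=
  ⟨{.red, .yellow, .blue}, fun x => by cases x <;> simp⟩

namespace Colour

theorem eq_or_eq_swapColour_or_eq_yellow {x : Colour} (hx : x ≠ yellow)
    (y : Colour) : y = x ∨ y = swapColour x ∨ y = yellow := by
  cases x <;> cases y <;> simp_all [swapColour]

theorem swapColour_ne_yellow {x : Colour} (hx : x ≠ yellow) :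
    swapColour x ≠ yellow := by
  cases x <;> simp_all [swapColour]

theorem ne_swapColour {x : Colour} (hx : x ≠ yellow) : x ≠ swapColour x := by
  cases x <;> simp_all [swapColour]

end Colour

namespace Gem

open Function SimpleGraph

variable {V : Type*} {M : SimpleGraph V} {c : Sym2 V → Colour}

theorem mem_edgeCut_of_adj {S : Set V} {u v : V} (h : M.Adj u v) (hu : u ∈ S) (hv : v ∉ S) :
    s(u, v) ∈ edgeCut M S :=
  ⟨u, v, rfl, h, hu, hv⟩

theorem notMem_of_mem_edgeCut {S : Set V} {a b : V} (h : s(a, b) ∈ edgeCut M S) (ha : a ∈ S) :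
    b ∉ S := by
  obtain ⟨p, q, hpq, -, hp, hq⟩ := h
  rcases Sym2.eq_iff.mp hpq with ⟨rfl, rfl⟩ | ⟨rfl, rfl⟩
  exacts [hq, (hq ha).elim]

theorem nonempty_of_mem_edgeCut {S : Set V} {e : Sym2 V} (h : e ∈ edgeCut M S) :
    S.Nonempty ∧ Sᶜ.Nonempty :=
  let ⟨p, q, _, _, hp, hq⟩ := h
  ⟨⟨p, hp⟩, ⟨q, hq⟩⟩

section Mate

variable (hM : IsCubic M) (hc : ProperEdgeColouring M c)
include hM hc

theorem existsUnique_adj_colour (v : V) (x : Colour) :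
    ∃! w, M.Adj v w ∧ c s(v, w) = x := by
  have hinj : (M.neighborSet v).InjOn fun w => c s(v, w) := fun w hw w' hw' h => by
    by_contra hne
    exact hc _ hw _ hw' (fun h => hne (Sym2.congr_right.mp h)) ⟨v, by simp, by simp⟩ h
  have himage : (fun w => c s(v, w)) '' M.neighborSet v = Set.univ := by
    rw [Set.eq_univ_iff_ncard, hinj.ncard_image, hM v, Nat.card_eq_fintype_card]
    rfl
  obtain ⟨w, hw, hwx⟩ := himage.symm ▸ Set.mem_univ x
  exact ⟨w, ⟨hw, hwx⟩, fun w' hw' => hinj hw'.1 hw (hw'.2.trans hwx.symm)⟩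

noncomputable def mate (x : Colour) (v : V) : V :=
  (existsUnique_adj_colour hM hc v x).exists.choose

variable {x y : Colour} {v w : V}

theorem adj_mate : M.Adj v (mate hM hc x v) :=
  (existsUnique_adj_colour hM hc v x).exists.choose_spec.1

theorem colour_mate : c s(v, mate hM hc x v) = x :=
  (existsUnique_adj_colour hM hc v x).exists.choose_spec.2

theorem eq_mate (h : M.Adj v w) : w = mate hM hc (c s(v, w)) v :=
  (existsUnique_adj_colour hM hc v _).unique ⟨h, rfl⟩ ⟨adj_mate hM hc, colour_mate hM hc⟩

theorem mate_mate : mate hM hc x (mate hM hc x v) = v := by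
  have h := eq_mate hM hc (adj_mate hM hc (x := x) (v := v)).symm
  rwa [Sym2.eq_swap, colour_mate hM hc, eq_comm] at h

theorem mate_involutive (x : Colour) : Involutive (mate hM hc x) :=
  fun _ => mate_mate hM hc

theorem mate_ne_self : mate hM hc x v ≠ v :=
  (adj_mate hM hc).ne'

theorem mate_ne_mate (hxy : x ≠ y) : mate hM hc x v ≠ mate hM hc y v := fun h => hxy <| by
  rw [← colour_mate hM hc (x := x) (v := v), h, colour_mate hM hc]

theorem mate_mem_iff {S : Set V} (hS : ∀ e ∈ edgeCut M S, c e ≠ x) :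
    mate hM hc x v ∈ S ↔ v ∈ S := by
  constructor
  · intro hm
    by_contra hv
    exact hS _ (Sym2.eq_swap ▸ mem_edgeCut_of_adj (adj_mate hM hc).symm hm hv) (colour_mate hM hc)
  · intro hv
    by_contra hm
    exact hS _ (mem_edgeCut_of_adj (adj_mate hM hc) hv hm) (colour_mate hM hc)

theorem edgeCut_inter_colour (S : Set V) (x : Colour) :
    edgeCut M S ∩ {e | c e = x} =
      (fun v => s(v, mate hM hc x v)) '' (S \ mate hM hc x ⁻¹' S) := by
  ext e
  constructor
  · rintro ⟨⟨u, v, rfl, huv, hu, hv⟩, rfl⟩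
    exact ⟨u, ⟨hu, by rwa [Set.mem_preimage, ← eq_mate hM hc huv]⟩,
      congrArg (s(u, ·)) (eq_mate hM hc huv).symm⟩
  · rintro ⟨u, ⟨hu, hmu⟩, rfl⟩
    exact ⟨mem_edgeCut_of_adj (adj_mate hM hc) hu hmu, colour_mate hM hc⟩

theorem ncard_edgeCut_inter_colour_modEq [Finite V] (S : Set V) (x : Colour) :
    (edgeCut M S ∩ {e | c e = x}).ncard ≡ S.ncard [MOD 2] := by
  have hinj : (S \ mate hM hc x ⁻¹' S).InjOn fun v => s(v, mate hM hc x v) := by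
    rintro u ⟨hu, -⟩ v ⟨-, hmv⟩ h
    rcases Sym2.eq_iff.mp h with ⟨huv, -⟩ | ⟨hum, -⟩
    · exact huv
    · exact (hmv (show mate hM hc x v ∈ S from hum ▸ hu)).elim
  rw [edgeCut_inter_colour hM hc, hinj.ncard_image]
  exact (mate_involutive hM hc x).ncard_sdiff_preimage_modEq (fun _ => mate_ne_self hM hc)
    S.toFinite

theorem colour_eq_of_edgeCut_eq_pair [Finite V] {S : Set V} {e₁ e₂ : Sym2 V}
    (hne : e₁ ≠ e₂) (hS : edgeCut M S = {e₁, e₂}) : c e₁ = c e₂ := by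
  by_contra hc₁₂
  obtain ⟨z, hz₁, hz₂⟩ : ∃ z, z ≠ c e₁ ∧ z ≠ c e₂ := by
    generalize c e₁ = a; generalize c e₂ = b; revert a b; decide
  have hone : (edgeCut M S ∩ {e | c e = c e₁}).ncard = 1 := by
    rw [hS, Set.ncard_eq_one]
    refine ⟨e₁, Set.ext fun e => ?_⟩
    simp only [Set.mem_inter_iff, Set.mem_insert_iff, Set.mem_singleton_iff, Set.mem_ofPred_eq]
    constructor
    · rintro ⟨rfl | rfl, he⟩
      · rfl
      · exact absurd he.symm hc₁₂
    · rintro rfl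
      exact ⟨Or.inl rfl, rfl⟩
  have hzero : (edgeCut M S ∩ {e | c e = z}).ncard = 0 := by
    rw [hS, Set.ncard_eq_zero, Set.eq_empty_iff_forall_notMem]
    rintro e ⟨rfl | rfl, rfl⟩
    exacts [hz₁ rfl, hz₂ rfl]
  have := (ncard_edgeCut_inter_colour_modEq hM hc S (c e₁)).trans
    (ncard_edgeCut_inter_colour_modEq hM hc S z).symm
  rw [hone, hzero] at this
  exact absurd this (by decide)

theorem rbAdj_mate (hx : x ≠ Colour.yellow) :
    (twoColourSubgraph M c Colour.red Colour.blue).Adj v (mate hM hc x v) :=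
  ⟨adj_mate hM hc, by rw [colour_mate hM hc]; cases x <;> simp_all⟩

theorem mate_swapColour_comm
    (h4 : ∀ v,
      ((twoColourSubgraph M c Colour.red Colour.blue).connectedComponentMk v).supp.ncard = 4)
    (hx : x ≠ Colour.yellow) (u : V) :
    mate hM hc x (mate hM hc (swapColour x) u) = mate hM hc (swapColour x) (mate hM hc x u) := by
  set m := mate hM hc
  have hx' := Colour.swapColour_ne_yellow hx
  have hxx' := Colour.ne_swapColour hx
  set K := ((twoColourSubgraph M c Colour.red Colour.blue).connectedComponentMk u).supp
  have hmem : ∀ y ≠ Colour.yellow, ∀ w ∈ K, m y w ∈ K := fun y hy w hw => by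
    rw [ConnectedComponent.mem_supp_iff] at hw ⊢
    rw [← hw]
    exact ConnectedComponent.eq.mpr (rbAdj_mate hM hc hy).reachable.symm
  have huK : u ∈ K := ConnectedComponent.mem_supp_iff _ _ |>.mpr rfl
  set v := m x u
  set b := m (swapColour x) u
  set d := m (swapColour x) v
  have huv : u ≠ v := (mate_ne_self hM hc).symm
  have hub : u ≠ b := (mate_ne_self hM hc).symm
  have hud : u ≠ d := by
    conv_lhs => rw [← mate_mate hM hc (x := x) (v := u)]
    exact mate_ne_mate hM hc hxx'
  have hvb : v ≠ b := mate_ne_mate hM hc hxx'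
  have hvd : v ≠ d := (mate_ne_self hM hc).symm
  have hbd : b ≠ d := (mate_involutive hM hc _).injective.ne huv
  have hK : K = {u, v, b, d} := by
    have hKfin : K.Finite := Set.finite_of_ncard_ne_zero (by rw [h4 u]; norm_num)
    refine (Set.eq_of_subset_of_ncard_le ?_ ?_ hKfin).symm
    · rintro w (rfl | rfl | rfl | rfl)
      exacts [huK, hmem x hx _ huK, hmem _ hx' _ huK, hmem _ hx' _ (hmem x hx _ huK)]
    · rw [h4 u, Set.ncard_insert_of_notMem (by simp [huv, hub, hud]),
        Set.ncard_insert_of_notMem (by simp [hvb, hvd]), Set.ncard_pair hbd]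
  have hmb : m x b ∈ K := hmem x hx _ (hmem _ hx' _ huK)
  rw [hK] at hmb
  rcases hmb with h | h | h | h
  · exact absurd (show m x u = b by rw [← h]; exact mate_mate hM hc) hvb
  · exact absurd ((mate_involutive hM hc x).injective h) hub.symm
  · exact absurd h (mate_ne_self hM hc)
  · exact h

theorem edgeCut_sdiff_pair (hx : x ≠ Colour.yellow) {S : Set V} {u b : V}
    (hb : mate hM hc (swapColour x) u = b) (hu : u ∈ S) (hbS : b ∈ S)
    (hS : edgeCut M S = {s(u, mate hM hc x u), s(b, mate hM hc x b)}) :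
    edgeCut M (S \ {u, b}) =
      {s(u, mate hM hc Colour.yellow u), s(b, mate hM hc Colour.yellow b)} := by
  have hpair : ∀ q ∈ ({u, b} : Set V), ({u, b} : Set V) = {q, mate hM hc (swapColour x) q} := by
    rintro q (hq | hq) <;> rw [hq]
    · rw [hb]
    · rw [Set.pair_comm, ← hb, mate_mate hM hc]
  have hout : ∀ q ∈ ({u, b} : Set V), q ∈ S ∧ mate hM hc x q ∉ S := by
    have hmem : ∀ q ∈ ({u, b} : Set V), s(q, mate hM hc x q) ∈ edgeCut M S := by
      rintro q (hq | hq) <;> rw [hS, hq] <;> simp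
    intro q hq
    have hqS : q ∈ S := by rcases hq with rfl | rfl <;> assumption
    exact ⟨hqS, notMem_of_mem_edgeCut (hmem q hq) hqS⟩
  have hyellow : ∀ q ∈ ({u, b} : Set V), mate hM hc Colour.yellow q ∈ S \ {u, b} := by
    intro q hq
    have hcut : ∀ e ∈ edgeCut M S, c e ≠ Colour.yellow := by
      rw [hS]
      rintro e (rfl | rfl) <;> rw [colour_mate hM hc] <;> exact hx
    refine ⟨(mate_mem_iff hM hc hcut).mpr (hout q hq).1, fun h => ?_⟩
    rw [hpair q hq] at h
    rcases h with h | h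
    exacts [mate_ne_self hM hc h, mate_ne_mate hM hc (Colour.swapColour_ne_yellow hx).symm h]
  ext e
  constructor
  · rintro ⟨p, q, rfl, hpq, ⟨hpS, hpQ⟩, hq⟩
    by_cases hqS : q ∈ S
    · have hqQ : q ∈ ({u, b} : Set V) := by_contra fun h => hq ⟨hqS, h⟩
      have hp := eq_mate hM hc hpq.symm
      rcases Colour.eq_or_eq_swapColour_or_eq_yellow hx (c s(q, p)) with hy | hy | hy <;>
        rw [hy] at hp <;> subst hp
      · exact absurd hpS (hout q hqQ).2
      · exact absurd (hpair q hqQ ▸ Or.inr rfl) hpQ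
      · rcases hqQ with rfl | rfl
        exacts [Or.inl Sym2.eq_swap, Or.inr Sym2.eq_swap]
    · exfalso
      have h := mem_edgeCut_of_adj hpq hpS hqS
      rw [hS] at h
      rcases h with h | h <;> rcases Sym2.eq_iff.mp h with ⟨hp, -⟩ | ⟨hp, -⟩ <;>
        rw [hp] at hpS hpQ
      exacts [hpQ (Or.inl rfl), (hout u (Or.inl rfl)).2 hpS, hpQ (Or.inr rfl),
        (hout b (Or.inr rfl)).2 hpS]
  · have hmem : ∀ q ∈ ({u, b} : Set V),
        s(q, mate hM hc Colour.yellow q) ∈ edgeCut M (S \ {u, b}) := fun q hq =>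
      Sym2.eq_swap ▸ mem_edgeCut_of_adj (adj_mate hM hc).symm (hyellow q hq) fun h => h.2 hq
    rintro (rfl | rfl)
    exacts [hmem u (Or.inl rfl), hmem b (Or.inr rfl)]

theorem exists_yellow_edgeCut_of_edgeCut_eq_pair
    (h4 : ∀ v,
      ((twoColourSubgraph M c Colour.red Colour.blue).connectedComponentMk v).supp.ncard = 4)
    {S : Set V} {e₁ e₂ : Sym2 V} (hne : e₁ ≠ e₂) (hS : edgeCut M S = {e₁, e₂})
    (hce : c e₁ = c e₂) (hx : c e₁ ≠ Colour.yellow) :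
    ∃ (S' : Set V) (g₁ g₂ : Sym2 V), S'.Nonempty ∧ S'ᶜ.Nonempty ∧ g₁ ≠ g₂ ∧
      edgeCut M S' = {g₁, g₂} ∧ c g₁ = Colour.yellow ∧ c g₂ = Colour.yellow := by
  obtain ⟨u, v, rfl, huv, hu, hv⟩ : e₁ ∈ edgeCut M S := hS ▸ Set.mem_insert _ _
  set x := c s(u, v)
  have hvx : v = mate hM hc x u := eq_mate hM hc huv
  set b := mate hM hc (swapColour x) u
  have hcol : ∀ e ∈ edgeCut M S, c e ≠ swapColour x := by
    rw [hS]
    rintro e (rfl | rfl)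
    exacts [Colour.ne_swapColour hx, hce ▸ Colour.ne_swapColour hx]
  have hbS : b ∈ S := (mate_mem_iff hM hc hcol).mpr hu
  have hdS : mate hM hc x b ∉ S := by
    rw [mate_swapColour_comm hM hc h4 hx, ← hvx, mate_mem_iff hM hc hcol]
    exact hv
  have he₂ : e₂ = s(b, mate hM hc x b) := by
    have h := mem_edgeCut_of_adj (adj_mate hM hc) hbS hdS
    rw [hS] at h
    refine (h.resolve_left fun h => ?_).symm
    rcases Sym2.eq_iff.mp h with ⟨hbu, -⟩ | ⟨hbv, -⟩
    exacts [mate_ne_self hM hc hbu,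
      mate_ne_mate hM hc (Colour.ne_swapColour hx).symm (hbv.trans hvx)]
  rw [he₂, hvx] at hS
  have hcut := edgeCut_sdiff_pair hM hc hx rfl hu hbS hS
  obtain ⟨hS'ne, hS'cne⟩ := nonempty_of_mem_edgeCut (hcut ▸ Set.mem_insert _ _)
  refine ⟨S \ {u, b}, _, _, hS'ne, hS'cne, fun h => ?_, hcut, colour_mate hM hc,
    colour_mate hM hc⟩
  rcases Sym2.eq_iff.mp h with ⟨hub, -⟩ | ⟨-, hyb⟩
  exacts [mate_ne_self hM hc hub.symm,
    mate_ne_mate hM hc (Colour.swapColour_ne_yellow hx).symm hyb]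

end Mate

theorem swapRB_of_colour_eq_yellow {D : Set (Sym2 V)}
    (hD : D ⊆ (twoColourSubgraph M c Colour.red Colour.blue).edgeSet) {e : Sym2 V}
    (he : c e = Colour.yellow) : swapRB c D e = Colour.yellow := by
  have heD : e ∉ D := fun h => by
    induction e using Sym2.ind with
    | _ u v => rcases (hD h).2 with h' | h' <;> rw [h'] at he <;> cases he
  simp [swapRB, heD, he]

end Gem

open Gem in
theorem swapRB_yellow_two_edge_cut_general {V : Type*} [Fintype V]
    (M : SimpleGraph V) (c : Sym2 V → Colour) (hgem : IsGem M c)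
    (hcut : ∃ S : Set V, S.Nonempty ∧ Sᶜ.Nonempty ∧ (edgeCut M S).ncard = 2)
    (D : Set (Sym2 V)) (hD : UnionOfRBComponents M c D) :
    ∃ (S : Set V) (g1 g2 : Sym2 V), S.Nonempty ∧ Sᶜ.Nonempty ∧ g1 ≠ g2 ∧
      edgeCut M S = {g1, g2} ∧
      swapRB c D g1 = Colour.yellow ∧ swapRB c D g2 = Colour.yellow := by
  obtain ⟨S, hS, hSc, hS2⟩ := hcut
  obtain ⟨e₁, e₂, hne, hSe⟩ := Set.ncard_eq_two.mp hS2
  have hce := colour_eq_of_edgeCut_eq_pair hgem.cubic hgem.proper hne hSe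
  obtain ⟨S', g₁, g₂, hS', hS'c, hg, hS'g, hg₁, hg₂⟩ :
      ∃ (S' : Set V) (g₁ g₂ : Sym2 V), S'.Nonempty ∧ S'ᶜ.Nonempty ∧ g₁ ≠ g₂ ∧
        edgeCut M S' = {g₁, g₂} ∧ c g₁ = Colour.yellow ∧ c g₂ = Colour.yellow := by
    by_cases hy : c e₁ = Colour.yellow
    · exact ⟨S, e₁, e₂, hS, hSc, hne, hSe, hy, hce ▸ hy⟩
    · exact exists_yellow_edgeCut_of_edgeCut_eq_pair hgem.cubic hgem.proper
        hgem.rb_components_card4 hne hSe hce hy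
  exact ⟨S', g₁, g₂, hS', hS'c, hg, hS'g, swapRB_of_colour_eq_yellow hD.1 hg₁,
    swapRB_of_colour_eq_yellow hD.1 hg₂⟩

/-- If a gem with more than 4 vertices has a 2-edge cut, then after swapping
red and blue on any union of connected components of the red-blue spanning
subgraph (a partial dual), the resulting gem has a 2-edge cut both of whose
edges are yellow under the new colouring. -/
theorem swapRB_yellow_two_edge_cut {V : Type*} [Fintype V]
    (M : SimpleGraph V) (c : Sym2 V → Colour) (hgem : IsGem M c)
    (hcard : 4 < Fintype.card V)
    (hcut : ∃ S : Set V, S.Nonempty ∧ Sᶜ.Nonempty ∧ (edgeCut M S).ncard = 2)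
    (D : Set (Sym2 V)) (hD : UnionOfRBComponents M c D) :
    ∃ (S : Set V) (g1 g2 : Sym2 V), S.Nonempty ∧ Sᶜ.Nonempty ∧ g1 ≠ g2 ∧
      edgeCut M S = {g1, g2} ∧
      swapRB c D g1 = Colour.yellow ∧ swapRB c D g2 = Colour.yellow :=
  swapRB_yellow_two_edge_cut_general M c hgem hcut D hD
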